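/- arXiv:2002.10369 — 3 statements merged into one kernel-verified Lean document; each statement's English description precedes it below -/
import Mathlib

section
/- For a nonsingular matrix A ∈ ℝ^{n×n} (n ≥ 2) and r > 0, the set S_{r,A} = {x ∈ S^{n-1} : ‖Ax‖ ≤ r} has (n-1)-dimensional surface measure bounded above by m_{n-1} · min{ r^n |det A|^{-1}, 1 }, where m_{n-1} is the surface area of the unit sphere S^{n-1}. -/
open Real MeasureTheory
open scoped Pointwise ENNReal

noncomputable def appE {n : ℕ} (A : Matrix (Fin n) (Fin n) ℝ) (x : EuclideanSpace ℝ (Fin n)) :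
    EuclideanSpace ℝ (Fin n) :=
  Matrix.toEuclideanLin A x

theorem stmt0 {n : ℕ} (hn : 2 ≤ n) (A : Matrix (Fin n) (Fin n) ℝ) (hA : A.det ≠ 0)
    (r : ℝ) (hr : 0 < r) :
    (volume.toSphere : Measure (Metric.sphere (0 : EuclideanSpace ℝ (Fin n)) 1))
        {x : Metric.sphere (0 : EuclideanSpace ℝ (Fin n)) 1 | ‖appE A (x : EuclideanSpace ℝ (Fin n))‖ ≤ r}
      ≤ (volume.toSphere : Measure (Metric.sphere (0 : EuclideanSpace ℝ (Fin n)) 1)) Set.univ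
        * ENNReal.ofReal (min (r ^ n * |A.det|⁻¹) 1) := by
  classical
  set E := EuclideanSpace ℝ (Fin n)
  set L : E →ₗ[ℝ] E := Matrix.toEuclideanLin A with hL
  have hdet : LinearMap.det L = A.det := by
    rw [hL, Matrix.toEuclideanLin_eq_toLin, LinearMap.det_toLin]
  have hdetL : LinearMap.det L ≠ 0 := by rw [hdet]; exact hA
  set s : Set (Metric.sphere (0 : E) 1) :=
    {x : Metric.sphere (0 : E) 1 | ‖appE A (x : E)‖ ≤ r} with hsdef
  have hcont : Continuous fun x : Metric.sphere (0 : E) 1 => ‖appE A (x : E)‖ := by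
    have : Continuous fun y : E => ‖L y‖ := (LinearMap.continuous_of_finiteDimensional L).norm
    exact this.comp continuous_subtype_val
  have hs : MeasurableSet s := (isClosed_le hcont continuous_const).measurableSet
  rcases le_or_gt 1 (r ^ n * |A.det|⁻¹) with h1 | h1
  · rw [min_eq_right h1, ENNReal.ofReal_one, mul_one]
    exact measure_mono (Set.subset_univ _)
  rw [min_eq_left h1.le]
  rw [Measure.toSphere_apply' _ hs, Measure.toSphere_apply_univ]
  have hdim : Module.finrank ℝ E = n := finrank_euclideanSpace_fin
  -- the cone is contained in the preimage of the closed ball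
  have hsub : (Set.Ioo (0 : ℝ) 1) • ((↑) '' s : Set E) ⊆ L ⁻¹' Metric.closedBall 0 r := by
    rintro y ⟨c, hc, _, ⟨x, hx, rfl⟩, rfl⟩
    simp only [Set.mem_preimage, Metric.mem_closedBall, dist_zero_right]
    have hx' : ‖L (x : E)‖ ≤ r := hx
    rw [_root_.map_smul, norm_smul, Real.norm_eq_abs, abs_of_pos hc.1]
    calc c * ‖L (x : E)‖ ≤ 1 * r := by
          exact mul_le_mul hc.2.le hx' (norm_nonneg _) zero_le_one
      _ = r := one_mul r
  have hpre : volume (L ⁻¹' Metric.closedBall 0 r)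
      = ENNReal.ofReal |(LinearMap.det L)⁻¹| * volume (Metric.closedBall (0 : E) r) :=
    Measure.addHaar_preimage_linearMap volume hdetL _
  have hball : volume (Metric.closedBall (0 : E) r)
      = ENNReal.ofReal (r ^ n) * volume (Metric.ball (0 : E) 1) := by
    rw [Measure.addHaar_closedBall volume _ hr.le, hdim]
  calc (Module.finrank ℝ E : ℝ≥0∞) * volume ((Set.Ioo (0:ℝ) 1) • ((↑) '' s : Set E))
      ≤ (Module.finrank ℝ E : ℝ≥0∞) * volume (L ⁻¹' Metric.closedBall 0 r) := by
        gcongr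
    _ = (Module.finrank ℝ E : ℝ≥0∞) * volume (Metric.ball (0 : E) 1)
        * ENNReal.ofReal (r ^ n * |A.det|⁻¹) := by
        rw [hpre, hball, hdet, abs_inv, ENNReal.ofReal_mul (by positivity : (0:ℝ) ≤ r ^ n)]
        ring
end

section
/- For any compact set of matrices 𝓜 ⊂ ℝ^{n×n} and any k ∈ ℕ, k ≥ 1, the stabilizability radius satisfies ρ̃(𝓜^k) = ρ̃(𝓜)^k, where 𝓜^k denotes the set of all products of k matrices from 𝓜. -/
/-!
Sampling a trajectory of `𝓜` at the multiples of `k` gives a trajectory of `𝓜^k`, so `λ^k` is an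
admissible rate for `𝓜^k` whenever `λ` is one for `𝓜`. Conversely, a trajectory of `𝓜^k` is
refined into a trajectory of `𝓜` by applying the `k` factors of each step one at a time. As `𝓜` is
compact, its matrices have operator norm at most some `K`, so between two sampled instants the state
grows by at most `K^k`, and every `λ > 0` with `λ^k` above an admissible rate of `𝓜^k` is admissible
for `𝓜`. Hence the two sets of rates correspond under `λ ↦ λ^k`, and so do their infima.
-/

open Real MeasureTheory

def IsTraj {n : ℕ} (M : Set (Matrix (Fin n) (Fin n) ℝ)) (x : ℕ → EuclideanSpace ℝ (Fin n)) : Prop :=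
  ∀ k : ℕ, ∃ A ∈ M, x (k + 1) = appE A (x k)

noncomputable def stabRadius {n : ℕ} (M : Set (Matrix (Fin n) (Fin n) ℝ)) : ℝ :=
  sInf {l : ℝ | 0 ≤ l ∧ ∃ C > (0:ℝ), ∀ x0 : EuclideanSpace ℝ (Fin n),
    ∃ x : ℕ → EuclideanSpace ℝ (Fin n), x 0 = x0 ∧ IsTraj M x ∧
      ∀ k : ℕ, ‖x k‖ ≤ C * l ^ k * ‖x0‖}

noncomputable def stabRadiusAt {n : ℕ} (M : Set (Matrix (Fin n) (Fin n) ℝ))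
    (x0 : EuclideanSpace ℝ (Fin n)) : ℝ :=
  sInf {l : ℝ | 0 ≤ l ∧ ∃ x : ℕ → EuclideanSpace ℝ (Fin n), x 0 = x0 ∧ IsTraj M x ∧
    ∃ C > (0:ℝ), ∀ k : ℕ, ‖x k‖ ≤ C * l ^ k * ‖x0‖}

def prodSet {n : ℕ} (M : Set (Matrix (Fin n) (Fin n) ℝ)) (k : ℕ) :
    Set (Matrix (Fin n) (Fin n) ℝ) :=
  {A | ∃ l : List (Matrix (Fin n) (Fin n) ℝ), l.length = k ∧ (∀ B ∈ l, B ∈ M) ∧ l.prod = A}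

section Rates

variable {S T : Set ℝ} {k : ℕ}

theorem sInf_eq_sInf_pow_of_pow_mem (hk : k ≠ 0) (hS : ∀ l ∈ S, 0 ≤ l) (hT : ∀ μ ∈ T, 0 ≤ μ)
    (hST : ∀ l ∈ S, l ^ k ∈ T) (hTS : ∀ μ ∈ T, ∀ l, 0 < l → μ ≤ l ^ k → l ∈ S) :
    sInf T = sInf S ^ k := by
  rcases S.eq_empty_or_nonempty with rfl | hSne
  · have : T = ∅ := Set.eq_empty_of_forall_notMem fun μ hμ =>
      hTS μ hμ (μ + 1) (by linarith [hT μ hμ]) <|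
        (le_add_of_nonneg_right zero_le_one).trans (le_self_pow₀ (by linarith [hT μ hμ]) hk)
    rw [this, Real.sInf_empty, zero_pow hk]
  have hr : 0 ≤ sInf S := Real.sInf_nonneg hS
  apply le_antisymm
  · refine le_of_forall_gt_imp_ge_of_dense fun c hc => ?_
    have hc0 : 0 ≤ c := (pow_nonneg hr k).trans hc.le
    have hroot : sInf S < c ^ (k⁻¹ : ℝ) := by
      simpa [Real.pow_rpow_inv_natCast hr hk] using
        Real.rpow_lt_rpow (pow_nonneg hr k) hc (by positivity : (0 : ℝ) < (k : ℝ)⁻¹)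
    obtain ⟨l, hl, hlc⟩ := exists_lt_of_csInf_lt hSne hroot
    calc sInf T ≤ l ^ k := csInf_le ⟨0, hT⟩ (hST l hl)
      _ ≤ (c ^ (k⁻¹ : ℝ)) ^ k := pow_le_pow_left₀ (hS l hl) hlc.le k
      _ = c := Real.rpow_inv_natCast_pow hc0 hk
  · refine le_csInf ⟨_, hST _ hSne.some_mem⟩ fun μ hμ => ?_
    have hroot : sInf S ≤ μ ^ (k⁻¹ : ℝ) := by
      refine le_of_forall_gt_imp_ge_of_dense fun l hl => csInf_le ⟨0, hS⟩ (hTS μ hμ l ?_ ?_)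
      · exact (Real.rpow_nonneg (hT μ hμ) _).trans_lt hl
      · simpa [Real.rpow_inv_natCast_pow (hT μ hμ) hk] using
          pow_le_pow_left₀ (Real.rpow_nonneg (hT μ hμ) _) hl.le k
    simpa [Real.rpow_inv_natCast_pow (hT μ hμ) hk] using pow_le_pow_left₀ hr hroot k

end Rates

section Trajectories

variable {n : ℕ} {M : Set (Matrix (Fin n) (Fin n) ℝ)}

theorem appE_mul (A B : Matrix (Fin n) (Fin n) ℝ) (v : EuclideanSpace ℝ (Fin n)) :
    appE (A * B) v = appE A (appE B v) := by
  simp [appE]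

theorem appE_one (v : EuclideanSpace ℝ (Fin n)) : appE 1 v = v := by
  simp [appE]

theorem IsCompact.exists_norm_appE_le (hM : IsCompact M) :
    ∃ K, 1 ≤ K ∧ ∀ A ∈ M, ∀ v, ‖appE A v‖ ≤ K * ‖v‖ := by
  have hcont : Continuous (Matrix.toEuclideanCLM (n := Fin n) (𝕜 := ℝ)) :=
    LinearMap.continuous_of_finiteDimensional
      (Matrix.toEuclideanCLM (n := Fin n) (𝕜 := ℝ)).toAlgEquiv.toLinearMap
  obtain ⟨C, hC⟩ := hM.exists_bound_of_continuousOn hcont.continuousOn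
  refine ⟨max C 1, le_max_right _ _, fun A hA v => ?_⟩
  calc ‖appE A v‖ = ‖Matrix.toEuclideanCLM (𝕜 := ℝ) A v‖ := rfl
    _ ≤ ‖Matrix.toEuclideanCLM (𝕜 := ℝ) A‖ * ‖v‖ := ContinuousLinearMap.le_opNorm _ v
    _ ≤ max C 1 * ‖v‖ := by gcongr; exact (hC A hA).trans (le_max_left _ _)

theorem one_mem_prodSet_zero : (1 : Matrix (Fin n) (Fin n) ℝ) ∈ prodSet M 0 :=
  ⟨[], rfl, by simp, rfl⟩

theorem mul_mem_prodSet_succ {A P : Matrix (Fin n) (Fin n) ℝ} {m : ℕ} (hA : A ∈ M)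
    (hP : P ∈ prodSet M m) : A * P ∈ prodSet M (m + 1) := by
  obtain ⟨L, hlen, hLM, rfl⟩ := hP
  exact ⟨A :: L, by simp [hlen], by simpa using ⟨hA, hLM⟩, List.prod_cons⟩

theorem IsTraj.exists_mem_prodSet {x : ℕ → EuclideanSpace ℝ (Fin n)} (hx : IsTraj M x)
    (j m : ℕ) : ∃ P ∈ prodSet M m, x (j + m) = appE P (x j) := by
  induction m with
  | zero => exact ⟨1, one_mem_prodSet_zero, by rw [add_zero, appE_one]⟩
  | succ m ih =>
    obtain ⟨P, hP, hxP⟩ := ih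
    obtain ⟨A, hA, hxA⟩ := hx (j + m)
    exact ⟨A * P, mul_mem_prodSet_succ hA hP, by rw [← add_assoc, hxA, hxP, appE_mul]⟩

theorem IsTraj.prodSet_comp_mul {x : ℕ → EuclideanSpace ℝ (Fin n)} (hx : IsTraj M x) (k : ℕ) :
    IsTraj (prodSet M k) (fun j => x (k * j)) := fun j => by
  simpa only [mul_add_one] using hx.exists_mem_prodSet (k * j) k

theorem IsTraj.norm_le_pow_mul {x : ℕ → EuclideanSpace ℝ (Fin n)} {K : ℝ} (hK : 0 ≤ K)
    (hKM : ∀ A ∈ M, ∀ v, ‖appE A v‖ ≤ K * ‖v‖) (hx : IsTraj M x) (j m : ℕ) :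
    ‖x (j + m)‖ ≤ K ^ m * ‖x j‖ := by
  induction m with
  | zero => simp
  | succ m ih =>
    obtain ⟨A, hA, hxA⟩ := hx (j + m)
    calc ‖x (j + (m + 1))‖ = ‖appE A (x (j + m))‖ := by rw [← add_assoc, hxA]
      _ ≤ K * ‖x (j + m)‖ := hKM A hA _
      _ ≤ K * (K ^ m * ‖x j‖) := by gcongr
      _ = K ^ (m + 1) * ‖x j‖ := by ring

-- The `k` factors of step `j` of `y` are applied one at a time, at steps `k * j, …, k * j + k - 1`.
theorem IsTraj.exists_isTraj_comp_mul_eq {k : ℕ} (hk : 0 < k) {y : ℕ → EuclideanSpace ℝ (Fin n)}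
    (hy : IsTraj (prodSet M k) y) : ∃ x, IsTraj M x ∧ ∀ j, x (k * j) = y j := by
  choose A hA hyA using hy
  choose L hlen hLM hLA using hA
  let B : ℕ → Matrix (Fin n) (Fin n) ℝ := fun m => (L (m / k)).reverse.getD (m % k) 1
  let x : ℕ → EuclideanSpace ℝ (Fin n) := fun m => Nat.rec (y 0) (fun i v => appE (B i) v) m
  have hxB : ∀ m, x (m + 1) = appE (B m) (x m) := fun _ => rfl
  have hB : ∀ j r (hr : r < k), B (k * j + r) = (L j).reverse[r]'(by simpa [hlen] using hr) :=
      fun j r hr => by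
    simp only [B, Nat.mul_add_div hk, Nat.mul_add_mod, Nat.div_eq_of_lt hr, Nat.mod_eq_of_lt hr,
      add_zero]
    exact List.getD_eq_getElem _ _ _
  have hBM : ∀ m, B m ∈ M := fun m => by
    have hr := Nat.mod_lt m hk
    rw [← Nat.div_add_mod m k, hB _ _ hr]
    exact hLM _ _ (List.mem_reverse.mp (List.getElem_mem _))
  have hblock : ∀ j, ∀ r ≤ k,
      x (k * j + r) = appE ((L j).reverse.take r).reverse.prod (x (k * j)) := by
    intro j r hr
    induction r with
    | zero => simp [appE_one]
    | succ r ih =>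
      rw [← add_assoc, hxB, ih (by omega), hB j r (by omega), ← List.take_concat_get' _ _
        (by simp [hlen]; omega), List.reverse_concat, List.prod_cons, appE_mul]
  have hxy : ∀ j, x (k * j) = y j := by
    intro j
    induction j with
    | zero => rfl
    | succ j ih =>
      rw [mul_add_one, hblock j k le_rfl, List.take_of_length_le (by simp [hlen]),
        List.reverse_reverse, hLA, ih, hyA]
  exact ⟨x, fun m => ⟨B m, hBM m, hxB m⟩, hxy⟩

end Trajectories

section StabRates

variable {n : ℕ} {M : Set (Matrix (Fin n) (Fin n) ℝ)}

def stabRates (M : Set (Matrix (Fin n) (Fin n) ℝ)) : Set ℝ :=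
  {l : ℝ | 0 ≤ l ∧ ∃ C > (0:ℝ), ∀ x0 : EuclideanSpace ℝ (Fin n),
    ∃ x : ℕ → EuclideanSpace ℝ (Fin n), x 0 = x0 ∧ IsTraj M x ∧
      ∀ k : ℕ, ‖x k‖ ≤ C * l ^ k * ‖x0‖}

theorem stabRadius_eq_sInf_stabRates (M : Set (Matrix (Fin n) (Fin n) ℝ)) :
    stabRadius M = sInf (stabRates M) := rfl

theorem pow_mem_stabRates_prodSet {l : ℝ} (k : ℕ) (hl : l ∈ stabRates M) :
    l ^ k ∈ stabRates (prodSet M k) := by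
  obtain ⟨hl0, C, hC, htraj⟩ := hl
  refine ⟨pow_nonneg hl0 k, C, hC, fun x0 => ?_⟩
  obtain ⟨x, hx0, hx, hxC⟩ := htraj x0
  refine ⟨fun j => x (k * j), by simpa using hx0, hx.prodSet_comp_mul k, fun j => ?_⟩
  simpa only [pow_mul] using hxC (k * j)

theorem mem_stabRates_of_pow_mem_prodSet {K : ℝ} (hK : 1 ≤ K)
    (hKM : ∀ A ∈ M, ∀ v, ‖appE A v‖ ≤ K * ‖v‖) {k : ℕ} (hk : 0 < k) {μ l : ℝ}
    (hμ : μ ∈ stabRates (prodSet M k)) (hl : 0 < l) (hμl : μ ≤ l ^ k) : l ∈ stabRates M := by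
  obtain ⟨hμ0, C, hC, htraj⟩ := hμ
  set D := max 1 (K / l)
  have hD : 1 ≤ D := le_max_left _ _
  refine ⟨hl.le, C * D ^ k, by positivity, fun x0 => ?_⟩
  obtain ⟨y, hy0, hy, hyC⟩ := htraj x0
  obtain ⟨x, hx, hxy⟩ := hy.exists_isTraj_comp_mul_eq hk
  refine ⟨x, by rw [← hy0, ← hxy, mul_zero], hx, fun m => ?_⟩
  obtain ⟨j, r, hr, rfl⟩ : ∃ j r, r < k ∧ k * j + r = m :=
    ⟨m / k, m % k, Nat.mod_lt m hk, Nat.div_add_mod m k⟩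
  have hpartial : K ^ r * l ^ (k * j) ≤ D ^ k * l ^ (k * j + r) := by
    calc K ^ r * l ^ (k * j) = (K / l) ^ r * l ^ (k * j + r) := by
          rw [div_pow, pow_add]; field_simp
      _ ≤ D ^ r * l ^ (k * j + r) := by gcongr; exact le_max_right _ _
      _ ≤ D ^ k * l ^ (k * j + r) := by gcongr
  calc ‖x (k * j + r)‖ ≤ K ^ r * ‖y j‖ := by
        simpa only [hxy] using hx.norm_le_pow_mul (by linarith) hKM (k * j) r
    _ ≤ K ^ r * (C * l ^ (k * j) * ‖x0‖) := by
        gcongr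
        calc ‖y j‖ ≤ C * μ ^ j * ‖x0‖ := hyC j
          _ ≤ C * l ^ (k * j) * ‖x0‖ := by rw [pow_mul]; gcongr
    _ = C * (K ^ r * l ^ (k * j)) * ‖x0‖ := by ring
    _ ≤ C * (D ^ k * l ^ (k * j + r)) * ‖x0‖ := by gcongr
    _ = C * D ^ k * l ^ (k * j + r) * ‖x0‖ := by ring

end StabRates

theorem stmt3 {n : ℕ} (M : Set (Matrix (Fin n) (Fin n) ℝ)) (hM : IsCompact M)
    (k : ℕ) (hk : 1 ≤ k) :
    stabRadius (prodSet M k) = stabRadius M ^ k := by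
  obtain ⟨K, hK, hKM⟩ := hM.exists_norm_appE_le
  rw [stabRadius_eq_sInf_stabRates, stabRadius_eq_sInf_stabRates]
  exact sInf_eq_sInf_pow_of_pow_mem (by omega) (fun _ hl => hl.1) (fun _ hμ => hμ.1)
    (fun _ hl => pow_mem_stabRates_prodSet k hl)
    (fun _ hμ _ hl hμl => mem_stabRates_of_pow_mem_prodSet hK hKM hk hμ hl hμl)
end

section
/- For the set 𝓜 = {A₁, A₂} where A₁ is rotation by π/4 and A₂ = diag(1/2, 2), the stabilizability radius satisfies ρ̃(𝓜) < 1; more precisely ρ̃(𝓜) ≤ 0.9^{1/4} < 0.975. -/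
open Real MeasureTheory

noncomputable def A1 : Matrix (Fin 2) (Fin 2) ℝ := (Real.sqrt 2 / 2) • !![1, 1; -1, 1]

noncomputable def A2 : Matrix (Fin 2) (Fin 2) ℝ := !![1/2, 0; 0, 2]

lemma appE_apply {n : ℕ} (A : Matrix (Fin n) (Fin n) ℝ) (x : EuclideanSpace ℝ (Fin n)) (i : Fin n) :
    appE A x i = A.mulVec x i := by
  simp [appE, Matrix.toEuclideanLin_apply]

lemma appE_A1_0 (y : EuclideanSpace ℝ (Fin 2)) :
    appE A1 y 0 = Real.sqrt 2 / 2 * (y 0 + y 1) := by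
  rw [appE_apply]; simp [A1, Matrix.mulVec, dotProduct, Fin.sum_univ_two]; ring

lemma appE_A1_1 (y : EuclideanSpace ℝ (Fin 2)) :
    appE A1 y 1 = Real.sqrt 2 / 2 * (- y 0 + y 1) := by
  rw [appE_apply]; simp [A1, Matrix.mulVec, dotProduct, Fin.sum_univ_two]; ring

lemma appE_A2_0 (y : EuclideanSpace ℝ (Fin 2)) : appE A2 y 0 = 1/2 * y 0 := by
  rw [appE_apply]; simp [A2, Matrix.mulVec, dotProduct, Fin.sum_univ_two]

lemma appE_A2_1 (y : EuclideanSpace ℝ (Fin 2)) : appE A2 y 1 = 2 * y 1 := by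
  rw [appE_apply]; simp [A2, Matrix.mulVec, dotProduct, Fin.sum_univ_two]

lemma normsq (y : EuclideanSpace ℝ (Fin 2)) : ‖y‖^2 = (y 0)^2 + (y 1)^2 := by
  rw [EuclideanSpace.norm_eq, Real.sq_sqrt (by positivity)]
  simp [Fin.sum_univ_two, sq_abs]

lemma norm_appE_A1 (y : EuclideanSpace ℝ (Fin 2)) : ‖appE A1 y‖ = ‖y‖ := by
  have h2 : Real.sqrt 2 ^ 2 = 2 := Real.sq_sqrt (by norm_num)
  have hsq : ‖appE A1 y‖^2 = ‖y‖^2 := by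
    rw [normsq, normsq, appE_A1_0, appE_A1_1]
    nlinarith [h2]
  rw [← Real.sqrt_sq (norm_nonneg (appE A1 y)), ← Real.sqrt_sq (norm_nonneg y), hsq]

def Pc (y : EuclideanSpace ℝ (Fin 2)) : Prop :=
  375 * (y 1)^2 ≤ 56 * ((y 0)^2 + (y 1)^2)

lemma norm_appE_A2 (y : EuclideanSpace ℝ (Fin 2)) (h : Pc y) :
    ‖appE A2 y‖ ≤ 0.9 * ‖y‖ := by
  have h1 : ‖appE A2 y‖^2 ≤ (0.9 * ‖y‖)^2 := by
    rw [mul_pow, normsq, normsq, appE_A2_0, appE_A2_1]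
    unfold Pc at h
    nlinarith
  nlinarith [sq_nonneg (‖appE A2 y‖ - 0.9*‖y‖), sq_nonneg (‖appE A2 y‖ + 0.9*‖y‖),
    norm_nonneg (appE A2 y), norm_nonneg y]

lemma iter2_0 (y : EuclideanSpace ℝ (Fin 2)) : appE A1 (appE A1 y) 0 = y 1 := by
  have h2 : Real.sqrt 2 * Real.sqrt 2 = 2 := Real.mul_self_sqrt (by norm_num)
  rw [appE_A1_0, appE_A1_0, appE_A1_1]
  linear_combination (y 1 / 2) * h2

lemma iter2_1 (y : EuclideanSpace ℝ (Fin 2)) : appE A1 (appE A1 y) 1 = - y 0 := by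
  have h2 : Real.sqrt 2 * Real.sqrt 2 = 2 := Real.mul_self_sqrt (by norm_num)
  rw [appE_A1_1, appE_A1_0, appE_A1_1]
  linear_combination (-(y 0) / 2) * h2

lemma key_pc (y : EuclideanSpace ℝ (Fin 2)) (h0 : ¬ Pc y) (h1 : ¬ Pc (appE A1 y))
    (h2 : ¬ Pc (appE A1 (appE A1 y))) : Pc (appE A1 (appE A1 (appE A1 y))) := by
  unfold Pc at *
  push_neg at h0 h1 h2
  set a := y 0 with ha
  set b := y 1 with hb
  have hs : (Real.sqrt 2 / 2)^2 = 1/2 := by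
    rw [div_pow, Real.sq_sqrt (by norm_num)]; norm_num
  have hsq : ∀ x : ℝ, (Real.sqrt 2 / 2 * x)^2 = x^2/2 := by
    intro x; rw [mul_pow, hs]; ring
  rw [appE_A1_0, appE_A1_1, hsq, hsq] at h1
  rw [iter2_0, iter2_1] at h2
  rw [appE_A1_1 (appE A1 (appE A1 y)), appE_A1_0 (appE A1 (appE A1 y)), iter2_0, iter2_1,
    hsq, hsq]
  by_contra h3
  push_neg at h3
  have hA : (375*((-a+b)^2) - 112*(a^2+b^2)) * (375*((-b + -a)^2) - 112*(a^2+b^2)) > 0 := by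
    apply mul_pos <;> nlinarith [h1, h3]
  have hB : (375*a^2 - 56*(a^2+b^2)) * (375*b^2 - 56*(a^2+b^2)) > 0 := by
    apply mul_pos <;> nlinarith [h0, h2]
  nlinarith [hA, hB, sq_nonneg (a^2+b^2)]

noncomputable def stepF (y : EuclideanSpace ℝ (Fin 2)) : EuclideanSpace ℝ (Fin 2) :=
  @ite _ (Pc y) (Classical.dec _) (appE A2 y) (appE A1 y)

lemma stepF_pos {y} (h : Pc y) : stepF y = appE A2 y := by
  unfold stepF; exact if_pos h

lemma stepF_neg {y} (h : ¬ Pc y) : stepF y = appE A1 y := by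
  unfold stepF; exact if_neg h

lemma stepF_norm_le (y : EuclideanSpace ℝ (Fin 2)) : ‖stepF y‖ ≤ ‖y‖ := by
  by_cases h : Pc y
  · rw [stepF_pos h]
    have := norm_appE_A2 y h
    nlinarith [norm_nonneg y]
  · rw [stepF_neg h, norm_appE_A1]

lemma stepF_iter_norm_le (y : EuclideanSpace ℝ (Fin 2)) (k : ℕ) : ‖stepF^[k] y‖ ≤ ‖y‖ := by
  induction k with
  | zero => simp
  | succ n ih =>
    rw [Function.iterate_succ_apply']
    exact (stepF_norm_le _).trans ih

lemma four_step (y : EuclideanSpace ℝ (Fin 2)) : ‖stepF^[4] y‖ ≤ 0.9 * ‖y‖ := by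
  have key : ∀ z : EuclideanSpace ℝ (Fin 2), Pc z → ∀ m : ℕ, 1 ≤ m →
      ‖stepF^[m] z‖ ≤ 0.9 * ‖z‖ := by
    intro z hz m hm
    obtain ⟨m', rfl⟩ := Nat.exists_eq_add_of_le hm
    rw [add_comm, Function.iterate_add_apply, Function.iterate_one, stepF_pos hz]
    exact (stepF_iter_norm_le _ _).trans (norm_appE_A2 z hz)
  by_cases h0 : Pc y
  · exact key y h0 4 (by norm_num)
  by_cases h1 : Pc (stepF y)
  · have : (4:ℕ) = 3 + 1 := rfl
    rw [this, Function.iterate_add_apply, Function.iterate_one]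
    calc ‖stepF^[3] (stepF y)‖ ≤ 0.9 * ‖stepF y‖ := key _ h1 3 (by norm_num)
      _ ≤ 0.9 * ‖y‖ := by nlinarith [stepF_norm_le y]
  by_cases h2 : Pc (stepF (stepF y))
  · have : (4:ℕ) = 2 + 2 := rfl
    rw [this, Function.iterate_add_apply]
    have e2 : stepF^[2] y = stepF (stepF y) := rfl
    rw [e2]
    calc ‖stepF^[2] (stepF (stepF y))‖ ≤ 0.9 * ‖stepF (stepF y)‖ := key _ h2 2 (by norm_num)
      _ ≤ 0.9 * ‖y‖ := by
          nlinarith [stepF_norm_le y, stepF_norm_le (stepF y), norm_nonneg (stepF (stepF y))]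
  · -- first three steps are A1
    have e1 : stepF y = appE A1 y := stepF_neg h0
    have e2 : stepF (stepF y) = appE A1 (appE A1 y) := by rw [e1, stepF_neg (e1 ▸ h1)]
    have h3 : Pc (stepF (stepF (stepF y))) := by
      rw [e2, stepF_neg (e2 ▸ h2)]
      exact key_pc y h0 (e1 ▸ h1) (e2 ▸ h2)
    have : (4:ℕ) = 1 + 3 := rfl
    rw [this, Function.iterate_add_apply]
    have e3 : stepF^[3] y = stepF (stepF (stepF y)) := rfl
    rw [e3]
    have hn : ‖stepF (stepF (stepF y))‖ = ‖y‖ := by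
      rw [e2, stepF_neg (e2 ▸ h2), norm_appE_A1, norm_appE_A1, norm_appE_A1]
    calc ‖stepF^[1] (stepF (stepF (stepF y)))‖ ≤ 0.9 * ‖stepF (stepF (stepF y))‖ :=
          key _ h3 1 le_rfl
      _ = 0.9 * ‖y‖ := by rw [hn]

lemma main_bound (x0 : EuclideanSpace ℝ (Fin 2)) (k : ℕ) :
    ‖stepF^[k] x0‖ ≤ 0.9 ^ (k / 4) * ‖x0‖ := by
  induction k using Nat.strong_induction_on with
  | _ k ih =>
    by_cases hk : k < 4
    · have : k / 4 = 0 := by omega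
      rw [this, pow_zero, one_mul]
      exact stepF_iter_norm_le x0 k
    · push_neg at hk
      obtain ⟨m, rfl⟩ := Nat.exists_eq_add_of_le hk
      rw [Function.iterate_add_apply]
      have h1 : ‖stepF^[4] (stepF^[m] x0)‖ ≤ 0.9 * ‖stepF^[m] x0‖ := by
        have := four_step (stepF^[m] x0)
        rwa [show stepF^[4] = stepF^[4] from rfl] at this
      have h2 : ‖stepF^[m] x0‖ ≤ 0.9 ^ (m / 4) * ‖x0‖ := ih m (by omega)
      have hdiv : (4 + m) / 4 = m / 4 + 1 := by omega
      rw [hdiv, pow_succ]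
      calc ‖stepF^[4] (stepF^[m] x0)‖ ≤ 0.9 * ‖stepF^[m] x0‖ := h1
        _ ≤ 0.9 * (0.9 ^ (m / 4) * ‖x0‖) := by nlinarith
        _ = 0.9 ^ (m / 4) * 0.9 * ‖x0‖ := by ring

lemma stepF_mem (y : EuclideanSpace ℝ (Fin 2)) :
    ∃ A ∈ ({A1, A2} : Set (Matrix (Fin 2) (Fin 2) ℝ)), stepF y = appE A y := by
  by_cases h : Pc y
  · exact ⟨A2, Or.inr rfl, stepF_pos h⟩
  · exact ⟨A1, Or.inl rfl, stepF_neg h⟩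

theorem stmt8 :
    stabRadius {A1, A2} ≤ (0.9 : ℝ) ^ ((1 : ℝ) / 4) ∧
      ((0.9 : ℝ) ^ ((1 : ℝ) / 4)) < 0.975 := by
  set l : ℝ := (0.9 : ℝ) ^ ((1 : ℝ) / 4) with hl
  have hl0 : 0 < l := Real.rpow_pos_of_pos (by norm_num) _
  have hl4 : l ^ (4:ℕ) = 0.9 := by
    rw [hl, ← Real.rpow_natCast ((0.9:ℝ) ^ ((1:ℝ)/4)) 4, ← Real.rpow_mul (by norm_num)]
    norm_num
  have hl1 : l ≤ 1 := Real.rpow_le_one (by norm_num) (by norm_num) (by norm_num)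
  have hl9 : (0.9:ℝ) ≤ l := by
    have := Real.rpow_le_rpow_of_exponent_ge (x := (0.9:ℝ)) (by norm_num) (by norm_num)
      (show (1:ℝ)/4 ≤ 1 by norm_num)
    rw [hl]
    simpa using this
  constructor
  · apply csInf_le
    · exact ⟨0, fun x hx => hx.1⟩
    · refine ⟨hl0.le, 2, by norm_num, fun x0 => ⟨fun k => stepF^[k] x0, rfl, ?_, ?_⟩⟩
      · intro k
        obtain ⟨A, hA, hstep⟩ := stepF_mem (stepF^[k] x0)
        exact ⟨A, hA, by simpa [Function.iterate_succ_apply'] using hstep⟩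
      · intro k
        have hb := main_bound x0 k
        have hpow : (0.9:ℝ) ^ (k / 4) ≤ 2 * l ^ k := by
          have hdecomp : l ^ k = 0.9 ^ (k / 4) * l ^ (k % 4) := by
            conv_lhs => rw [← Nat.div_add_mod k 4]
            rw [pow_add, pow_mul, hl4]
          rw [hdecomp]
          have h3 : l ^ 3 ≤ l ^ (k % 4) :=
            pow_le_pow_of_le_one hl0.le hl1 (by omega)
          have h93 : (0.9:ℝ)^3 ≤ l ^ 3 := by
            apply pow_le_pow_left₀ (by norm_num) hl9
          have hhalf : (1:ℝ)/2 ≤ l ^ (k % 4) := by nlinarith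
          nlinarith [pow_nonneg (show (0:ℝ) ≤ 0.9 by norm_num) (k / 4)]
        calc ‖stepF^[k] x0‖ ≤ 0.9 ^ (k / 4) * ‖x0‖ := hb
          _ ≤ 2 * l ^ k * ‖x0‖ := by nlinarith [norm_nonneg x0]
  · apply lt_of_pow_lt_pow_left₀ 4 (by norm_num : (0:ℝ) ≤ 0.975)
    rw [hl4]
    norm_num
end
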